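/- Let g be the Lie superalgebra with even part an abelian Lie algebra h, odd part spanned by X_1, X_2, Y_1, Y_2 with relations [h,X_i] = α(h)X_i, [h,Y_i] = −α(h)Y_i, [Y_i,Y_j] = [X_i,X_j] = 0, [X_i,Y_j] = δ_{ij}H, where H ∈ h, α ∈ h* nonzero, α(H) = 0. Then the supercharacter of every finite-dimensional irreducible g-module with highest weight λ is e^λ if λ(H) = 0 and e^λ(1 − e^{−α})² if λ(H) ≠ 0; in the latter case the module is four-dimensional. -/

import Mathlib

open scoped Classical

namespace Stmt16

open Module

variable {hL : Type*} [AddCommGroup hL] [Module ℂ hL]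
variable {V : Type*} [AddCommGroup V] [Module ℂ V]

/-- the weight space `V_μ = {u : ρ(h)u = μ(h)u for all h}`. -/
noncomputable def wt (ρ : hL →ₗ[ℂ] Module.End ℂ V) (μ : hL →ₗ[ℂ] ℂ) : Submodule ℂ V :=
  ⨅ h : hL, LinearMap.ker (ρ h - μ h • (LinearMap.id : Module.End ℂ V))

/-- the even part of `V` with respect to the grading involution `gr`. -/
noncomputable def evenPart (gr : Module.End ℂ V) : Submodule ℂ V :=
  LinearMap.ker (gr - LinearMap.id)

/-- the odd part of `V` with respect to the grading involution `gr`. -/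
noncomputable def oddPart (gr : Module.End ℂ V) : Submodule ℂ V :=
  LinearMap.ker (gr + LinearMap.id)

/-- the coefficient `sdim V_μ` of the supercharacter at `e^μ`. -/
noncomputable def sdimWt (gr : Module.End ℂ V) (ρ : hL →ₗ[ℂ] Module.End ℂ V)
    (μ : hL →ₗ[ℂ] ℂ) : ℤ :=
  (finrank ℂ (wt ρ μ ⊓ evenPart gr : Submodule ℂ V) : ℤ) -
    (finrank ℂ (wt ρ μ ⊓ oddPart gr : Submodule ℂ V) : ℤ)

/-! Normal ordering with the relations `[Xᵢ, Yⱼ] = δᵢⱼH`, `Yᵢ² = 0`, `Y₀Y₁ = -Y₁Y₀` shows that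
the span of `v, Y₀v, Y₁v, Y₁Y₀v` is a graded submodule, hence all of `V`; these vectors have weights
`λ, λ - α, λ - α, λ - 2α` and parities `+, -, -, +`.

If `λ(H) ≠ 0` they form a basis: `X₁X₀Y₁Y₀v = -λ(H)²v`, so `Y₁Y₀v ≠ 0`, and applying `Y₁Y₀`,
`Y₀`, `Y₁` to a linear relation isolates its coefficients one at a time. If `λ(H) = 0`, the span of
`Y₀v, Y₁v, Y₁Y₀v` is itself a graded submodule. It is either zero, or it contains `v`; in the
latter case `Y₁Y₀`, which kills that span, kills `v`; then `Y₀` and `Y₁` kill the span too, hence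
`v`. Either way `V = ℂv`. The supercharacter is then read off a basis of weight vectors of
definite parity. -/

section WeightBasis

variable {ι : Type*} (b : Basis ι ℂ V)

lemma mem_ker_sub_smul_iff_of_basis {T : End ℂ V} {f : ι → ℂ} (hT : ∀ i, T (b i) = f i • b i)
    (c : ℂ) (u : V) :
    u ∈ LinearMap.ker (T - c • LinearMap.id) ↔ ∀ i, b.repr u i ≠ 0 → f i = c := by
  have hrepr (i : ι) : b.repr ((T - c • LinearMap.id : End ℂ V) u) i = (f i - c) * b.repr u i :=
    LinearMap.congr_fun (b.ext (f₁ := (b.coord i).comp (T - c • LinearMap.id))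
      (f₂ := (f i - c) • b.coord i) fun j => by
        obtain rfl | hij := eq_or_ne j i <;> simp [sub_smul, *]) u
  rw [LinearMap.mem_ker, ← b.repr.map_eq_zero_iff, Finsupp.ext_iff]
  simp only [hrepr, Finsupp.coe_zero, Pi.zero_apply, mul_eq_zero, sub_eq_zero]
  exact forall_congr' fun i => or_iff_not_imp_right

lemma wt_inf_ker_eq_span {ρ : hL →ₗ[ℂ] End ℂ V} {gr : End ℂ V} {wts : ι → hL →ₗ[ℂ] ℂ}
    {p : ι → ℂ} (hρ : ∀ h i, ρ h (b i) = wts i h • b i) (hgr : ∀ i, gr (b i) = p i • b i)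
    (μ : hL →ₗ[ℂ] ℂ) (c : ℂ) :
    wt ρ μ ⊓ LinearMap.ker (gr - c • LinearMap.id) =
      Submodule.span ℂ (b '' {i | wts i = μ ∧ p i = c}) := by
  ext u
  simp only [Submodule.mem_inf, wt, Submodule.mem_iInf, mem_ker_sub_smul_iff_of_basis b (hρ _),
    mem_ker_sub_smul_iff_of_basis b hgr, b.mem_span_image, Set.subset_def, Finset.mem_coe,
    Finsupp.mem_support_iff, Set.mem_ofPred_eq, LinearMap.ext_iff]
  exact ⟨fun ⟨hw, hp⟩ i hi => ⟨fun h => hw h i hi, hp i hi⟩,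
    fun hu => ⟨fun h i hi => (hu i hi).1 h, fun i hi => (hu i hi).2⟩⟩

lemma finrank_span_basis_image (s : Set ι) [Fintype s] :
    finrank ℂ (Submodule.span ℂ (b '' s)) = Fintype.card s := by
  rw [Set.image_eq_range]
  exact finrank_span_eq_card (b.linearIndependent.comp _ Subtype.val_injective)

theorem sdimWt_eq_sum_of_basis [Fintype ι] {ρ : hL →ₗ[ℂ] End ℂ V} {gr : End ℂ V}
    (wts : ι → hL →ₗ[ℂ] ℂ) (sgn : ι → ℤ) (hsgn : ∀ i, sgn i = 1 ∨ sgn i = -1)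
    (hρ : ∀ h i, ρ h (b i) = wts i h • b i) (hgr : ∀ i, gr (b i) = (sgn i : ℂ) • b i)
    (μ : hL →ₗ[ℂ] ℂ) :
    sdimWt gr ρ μ = ∑ i, if wts i = μ then sgn i else 0 := by
  have hfinrank (c : ℂ) :
      finrank ℂ (wt ρ μ ⊓ LinearMap.ker (gr - c • LinearMap.id) : Submodule ℂ V) =
        ∑ i, if wts i = μ ∧ (sgn i : ℂ) = c then 1 else 0 := by
    rw [wt_inf_ker_eq_span b hρ hgr, finrank_span_basis_image, Fintype.card_subtype,
      Finset.card_filter]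
    simp only [Set.mem_ofPred_eq]
  have heven : evenPart gr = LinearMap.ker (gr - (1 : ℂ) • LinearMap.id) := by
    rw [one_smul]; rfl
  have hodd : oddPart gr = LinearMap.ker (gr - (-1 : ℂ) • LinearMap.id) := by
    rw [neg_smul, one_smul, sub_neg_eq_add]; rfl
  rw [sdimWt, heven, hodd, hfinrank, hfinrank]
  push_cast
  rw [← Finset.sum_sub_distrib]
  refine Finset.sum_congr rfl fun i _ => ?_
  rcases hsgn i with hi | hi <;> by_cases hμ : wts i = μ <;> norm_num [hi, hμ]

end WeightBasis

def IsGradedIrreducible (gr : End ℂ V) (ρ : hL →ₗ[ℂ] End ℂ V) (X Y : Fin 2 → End ℂ V) : Prop :=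
  ∀ U : Submodule ℂ V, (∀ u ∈ U, gr u ∈ U) → (∀ h : hL, ∀ u ∈ U, ρ h u ∈ U) →
    (∀ i, ∀ u ∈ U, X i u ∈ U) → (∀ i, ∀ u ∈ U, Y i u ∈ U) → U = ⊥ ∨ U = ⊤

lemma IsGradedIrreducible.span_eq_bot_or_eq_top {gr : End ℂ V} {ρ : hL →ₗ[ℂ] End ℂ V}
    {X Y : Fin 2 → End ℂ V} (hirr : IsGradedIrreducible gr ρ X Y) {s : Set V}
    (hgr : ∀ x ∈ s, gr x ∈ Submodule.span ℂ s) (hρ : ∀ h, ∀ x ∈ s, ρ h x ∈ Submodule.span ℂ s)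
    (hX : ∀ i, ∀ x ∈ s, X i x ∈ Submodule.span ℂ s)
    (hY : ∀ i, ∀ x ∈ s, Y i x ∈ Submodule.span ℂ s) :
    Submodule.span ℂ s = ⊥ ∨ Submodule.span ℂ s = ⊤ := by
  have hspan {T : End ℂ V} (hT : ∀ x ∈ s, T x ∈ Submodule.span ℂ s) :
      ∀ u ∈ Submodule.span ℂ s, T u ∈ Submodule.span ℂ s :=
    fun u hu => (Submodule.map_span_le T s _).2 hT ⟨u, hu, rfl⟩
  exact hirr _ (hspan hgr) (fun h => hspan (hρ h)) (fun i => hspan (hX i)) (fun i => hspan (hY i))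

structure IsHighestWeightVector (α : hL →ₗ[ℂ] ℂ) (H : hL) (gr : End ℂ V)
    (ρ : hL →ₗ[ℂ] End ℂ V) (X Y : Fin 2 → End ℂ V) (lam : hL →ₗ[ℂ] ℂ) (v : V) : Prop where
  odd_Y : ∀ i, Y i * gr = -(gr * Y i)
  bracket_Y : ∀ (h : hL) (i), ρ h * Y i - Y i * ρ h = -(α h) • Y i
  anticomm_Y : ∀ i j, Y i * Y j + Y j * Y i = 0
  anticomm_XY : ∀ i j, X i * Y j + Y j * X i = if i = j then ρ H else 0
  root_H : α H = 0
  even : gr v = v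
  X_apply : ∀ i, X i v = 0
  weight : ∀ h, ρ h v = lam h • v

def pbwVectors (Y : Fin 2 → End ℂ V) (v : V) : Fin 4 → V := ![v, Y 0 v, Y 1 v, Y 1 (Y 0 v)]

namespace IsHighestWeightVector

variable {α : hL →ₗ[ℂ] ℂ} {H : hL} {gr : End ℂ V} {ρ : hL →ₗ[ℂ] End ℂ V}
  {X Y : Fin 2 → End ℂ V} {lam : hL →ₗ[ℂ] ℂ} {v : V}

lemma gr_Y (hV : IsHighestWeightVector α H gr ρ X Y lam v) (i : Fin 2) (u : V) :
    gr (Y i u) = -Y i (gr u) := by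
  simpa [neg_eq_iff_eq_neg] using (LinearMap.congr_fun (hV.odd_Y i) u).symm

lemma rho_Y (hV : IsHighestWeightVector α H gr ρ X Y lam v) (h : hL) (i : Fin 2) (u : V) :
    ρ h (Y i u) = Y i (ρ h u) - α h • Y i u := by
  have := LinearMap.congr_fun (hV.bracket_Y h i) u
  simp only [LinearMap.sub_apply, Module.End.mul_apply, LinearMap.smul_apply] at this
  rw [sub_eq_iff_eq_add.1 this]; module

lemma X_Y (hV : IsHighestWeightVector α H gr ρ X Y lam v) (i j : Fin 2) (u : V) :
    X i (Y j u) = (if i = j then ρ H u else 0) - Y j (X i u) := by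
  have := LinearMap.congr_fun (hV.anticomm_XY i j) u
  rw [LinearMap.add_apply, Module.End.mul_apply, Module.End.mul_apply] at this
  rw [eq_sub_iff_add_eq.2 this]
  split_ifs <;> rfl

lemma Y_Y_self (hV : IsHighestWeightVector α H gr ρ X Y lam v) (i : Fin 2) (u : V) :
    Y i (Y i u) = 0 := by
  have := LinearMap.congr_fun (hV.anticomm_Y i i) u
  rw [LinearMap.add_apply, Module.End.mul_apply, LinearMap.zero_apply, ← two_smul ℂ] at this
  exact (smul_eq_zero.1 this).resolve_left two_ne_zero

lemma Y_zero_Y_one (hV : IsHighestWeightVector α H gr ρ X Y lam v) (u : V) :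
    Y 0 (Y 1 u) = -Y 1 (Y 0 u) :=
  eq_neg_of_add_eq_zero_left (LinearMap.congr_fun (hV.anticomm_Y 0 1) u)

lemma rho_pbwVectors (hV : IsHighestWeightVector α H gr ρ X Y lam v) (h : hL) (i : Fin 4) :
    ρ h (pbwVectors Y v i) = (![lam, lam - α, lam - α, lam - 2 • α] i) h • pbwVectors Y v i := by
  fin_cases i <;> simp [pbwVectors, hV.rho_Y, hV.weight] <;> module

lemma gr_pbwVectors (hV : IsHighestWeightVector α H gr ρ X Y lam v) (i : Fin 4) :
    gr (pbwVectors Y v i) = ((![1, -1, -1, 1] i : ℤ) : ℂ) • pbwVectors Y v i := by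
  fin_cases i <;> simp [pbwVectors, hV.gr_Y, hV.even]

lemma span_pbwVectors (hV : IsHighestWeightVector α H gr ρ X Y lam v)
    (hirr : IsGradedIrreducible gr ρ X Y) (hv : v ≠ 0) :
    Submodule.span ℂ (Set.range (pbwVectors Y v)) = ⊤ := by
  refine (hirr.span_eq_bot_or_eq_top ?_ ?_ ?_ ?_).resolve_left fun hbot => hv ?_
  · simp only [Set.forall_mem_range, hV.gr_pbwVectors]
    exact fun i => Submodule.smul_mem _ _ (Submodule.subset_span ⟨i, rfl⟩)
  · simp only [Set.forall_mem_range, hV.rho_pbwVectors]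
    exact fun h i => Submodule.smul_mem _ _ (Submodule.subset_span ⟨i, rfl⟩)
  · simp [Fin.forall_fin_succ, pbwVectors, hV.X_Y, hV.X_apply, hV.rho_Y, hV.weight, hV.root_H,
      Submodule.smul_mem, Submodule.mem_span_of_mem]
  · simp [Fin.forall_fin_succ, pbwVectors, hV.Y_Y_self, hV.Y_zero_Y_one, Submodule.mem_span_of_mem]
  · rw [← Submodule.mem_bot ℂ, ← hbot]
    exact Submodule.subset_span ⟨0, rfl⟩

lemma Y_apply_eq_zero (hV : IsHighestWeightVector α H gr ρ X Y lam v)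
    (hirr : IsGradedIrreducible gr ρ X Y) (hlam : lam H = 0) (i : Fin 2) : Y i v = 0 := by
  set s : Set V := {Y 0 v, Y 1 v, Y 1 (Y 0 v)}
  have hkill (T : End ℂ V) (hT : ∀ x ∈ s, T x = 0) (hvs : v ∈ Submodule.span ℂ s) : T v = 0 :=
    (Submodule.mem_bot ℂ).1 <|
      (Submodule.map_span_le T s ⊥).2 (fun x hx => by simp [hT x hx]) ⟨v, hvs, rfl⟩
  rcases hirr.span_eq_bot_or_eq_top (s := s)
    (by simp [s, hV.gr_Y, hV.even, Submodule.mem_span_of_mem])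
    (by simp [s, hV.rho_Y, hV.weight, ← sub_smul, Submodule.smul_mem, Submodule.mem_span_of_mem])
    (by simp [s, hV.X_Y, hV.X_apply, hV.rho_Y, hV.weight, hV.root_H, hlam])
    (by simp [s, Fin.forall_fin_succ, hV.Y_Y_self, hV.Y_zero_Y_one, Submodule.mem_span_of_mem])
    with hbot | htop
  · rw [← Submodule.mem_bot ℂ, ← hbot]
    fin_cases i <;> exact Submodule.subset_span (by simp [s])
  · have hvs : v ∈ Submodule.span ℂ s := htop ▸ Submodule.mem_top
    have hw : Y 1 (Y 0 v) = 0 :=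
      hkill (Y 1 * Y 0) (by simp [s, hV.Y_Y_self, hV.Y_zero_Y_one]) hvs
    fin_cases i
    · exact hkill (Y 0) (by simp [s, hw, hV.Y_Y_self, hV.Y_zero_Y_one]) hvs
    · exact hkill (Y 1) (by simp [s, hw, hV.Y_Y_self]) hvs

lemma span_singleton_eq_top (hV : IsHighestWeightVector α H gr ρ X Y lam v)
    (hirr : IsGradedIrreducible gr ρ X Y) (hv : v ≠ 0) (hlam : lam H = 0) :
    Submodule.span ℂ {v} = ⊤ := by
  rw [eq_top_iff, ← hV.span_pbwVectors hirr hv, Submodule.span_le]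
  rintro _ ⟨i, rfl⟩
  fin_cases i <;> simp [pbwVectors, hV.Y_apply_eq_zero hirr hlam]

lemma linearIndependent_pbwVectors (hV : IsHighestWeightVector α H gr ρ X Y lam v)
    (hv : v ≠ 0) (hlam : lam H ≠ 0) : LinearIndependent ℂ (pbwVectors Y v) := by
  have hw : Y 1 (Y 0 v) ≠ 0 := by
    intro h
    have := congrArg (X 1 ∘ X 0) h
    simp [hV.X_Y, hV.X_apply, hV.weight, hlam, hv] at this
  rw [Fintype.linearIndependent_iff]
  intro c hc
  simp only [Fin.sum_univ_four, pbwVectors, Matrix.cons_val] at hc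
  have h0 : c 0 = 0 := by
    simpa [hV.Y_Y_self, hV.Y_zero_Y_one, hw] using congrArg (Y 1 ∘ Y 0) hc
  have h2 : c 2 = 0 := by
    simpa [hV.Y_Y_self, hV.Y_zero_Y_one, hw, h0] using congrArg (Y 0) hc
  have h1 : c 1 = 0 := by
    simpa [hV.Y_Y_self, hw, h0] using congrArg (Y 1) hc
  have h3 : c 3 = 0 := by
    simpa [hw, h0, h1, h2] using hc
  intro i
  fin_cases i <;> assumption

end IsHighestWeightVector

theorem statement16_general
    (α : hL →ₗ[ℂ] ℂ) (hα : α ≠ 0) (H : hL) (hαH : α H = 0)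
    (gr : Module.End ℂ V)
    (ρ : hL →ₗ[ℂ] Module.End ℂ V) (Xop Yop : Fin 2 → Module.End ℂ V)
    -- the Xᵢ, Yᵢ are odd
    (hYodd : ∀ i, Yop i * gr = -(gr * Yop i))
    -- the bracket relations
    (hHY : ∀ (h : hL) (i), ρ h * Yop i - Yop i * ρ h = -(α h) • Yop i)
    (hYY : ∀ i j, Yop i * Yop j + Yop j * Yop i = 0)
    (hXY : ∀ i j, Xop i * Yop j + Yop j * Xop i = if i = j then ρ H else 0)
    -- V is an irreducible graded module
    (hirr : ∀ U : Submodule ℂ V, (∀ u ∈ U, gr u ∈ U) → (∀ h : hL, ∀ u ∈ U, ρ h u ∈ U) →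
      (∀ i, ∀ u ∈ U, Xop i u ∈ U) → (∀ i, ∀ u ∈ U, Yop i u ∈ U) → U = ⊥ ∨ U = ⊤)
    -- highest weight vector of weight λ, taken even
    (lam : hL →ₗ[ℂ] ℂ) (v : V) (hv : v ≠ 0) (hvev : gr v = v)
    (hXv : ∀ i, Xop i v = 0) (hwt : ∀ h : hL, ρ h v = lam h • v) :
    (lam H = 0 →
      ∀ μ : hL →ₗ[ℂ] ℂ, sdimWt gr ρ μ = if μ = lam then 1 else 0) ∧
    (lam H ≠ 0 →
      finrank ℂ V = 4 ∧
        ∀ μ : hL →ₗ[ℂ] ℂ, sdimWt gr ρ μ =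
          if μ = lam then 1 else if μ = lam - α then -2 else
            if μ = lam - 2 • α then 1 else 0) := by
  have hV : IsHighestWeightVector α H gr ρ Xop Yop lam v :=
    ⟨hYodd, hHY, hYY, hXY, hαH, hvev, hXv, hwt⟩
  refine ⟨fun hlam μ => ?_, fun hlam => ?_⟩
  · let b : Basis (Fin 1) ℂ V := Basis.mk (v := ![v]) (linearIndependent_unique_iff.2 hv)
      (by simp [hV.span_singleton_eq_top hirr hv hlam])
    rw [sdimWt_eq_sum_of_basis b (fun _ => lam) (fun _ => 1) (fun _ => .inl rfl)
      (fun h _ => by simp [b, hwt]) (fun _ => by simp [b, hvev])]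
    simp [eq_comm]
  · let b := Basis.mk (hV.linearIndependent_pbwVectors hv hlam) (hV.span_pbwVectors hirr hv).ge
    refine ⟨by simp [finrank_eq_card_basis b], fun μ => ?_⟩
    rw [sdimWt_eq_sum_of_basis b ![lam, lam - α, lam - α, lam - 2 • α] ![1, -1, -1, 1]
      (by decide) (by simpa [b] using hV.rho_pbwVectors) (by simpa [b] using hV.gr_pbwVectors)]
    simp only [Fin.sum_univ_four, Matrix.cons_val, @eq_comm _ μ]
    by_cases e0 : lam = μ
    · subst e0; simp [hα]
    by_cases e1 : lam - α = μ
    · subst e1; simp [e0, two_smul, hα]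
    by_cases e2 : lam - 2 • α = μ <;> simp [e0, e1, e2]

/-- let `g` be the solvable Lie superalgebra with abelian even part `h`,
odd part spanned by `X₁, X₂, Y₁, Y₂`, relations `[h,Xᵢ] = α(h)Xᵢ`, `[h,Yᵢ] = −α(h)Yᵢ`,
`[Yᵢ,Yⱼ] = [Xᵢ,Xⱼ] = 0`, `[Xᵢ,Yⱼ] = δᵢⱼH`, where `α ≠ 0` and `α(H) = 0`.  The
supercharacter of every finite-dimensional (graded-)irreducible `g`-module with
highest weight `λ` (an even vector `v ≠ 0` with `X₁v = X₂v = 0`, `hv = λ(h)v`) is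
`e^λ` if `λ(H) = 0` and `e^λ(1 − e^{−α})² = e^λ − 2e^{λ−α} + e^{λ−2α}` if `λ(H) ≠ 0`;
in the latter case the module is four-dimensional. -/
theorem statement16 [FiniteDimensional ℂ V]
    (α : hL →ₗ[ℂ] ℂ) (hα : α ≠ 0) (H : hL) (hαH : α H = 0)
    (gr : Module.End ℂ V) (hgr : gr * gr = 1)
    (ρ : hL →ₗ[ℂ] Module.End ℂ V) (Xop Yop : Fin 2 → Module.End ℂ V)
    -- h acts as an abelian Lie algebra of even operators
    (hcomm : ∀ h₁ h₂ : hL, ρ h₁ * ρ h₂ = ρ h₂ * ρ h₁)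
    (hρeven : ∀ h : hL, ρ h * gr = gr * ρ h)
    -- the Xᵢ, Yᵢ are odd
    (hXodd : ∀ i, Xop i * gr = -(gr * Xop i)) (hYodd : ∀ i, Yop i * gr = -(gr * Yop i))
    -- the bracket relations
    (hHX : ∀ (h : hL) (i), ρ h * Xop i - Xop i * ρ h = α h • Xop i)
    (hHY : ∀ (h : hL) (i), ρ h * Yop i - Yop i * ρ h = -(α h) • Yop i)
    (hXX : ∀ i j, Xop i * Xop j + Xop j * Xop i = 0)
    (hYY : ∀ i j, Yop i * Yop j + Yop j * Yop i = 0)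
    (hXY : ∀ i j, Xop i * Yop j + Yop j * Xop i = if i = j then ρ H else 0)
    -- V is an irreducible graded module
    (hirr : ∀ U : Submodule ℂ V, (∀ u ∈ U, gr u ∈ U) → (∀ h : hL, ∀ u ∈ U, ρ h u ∈ U) →
      (∀ i, ∀ u ∈ U, Xop i u ∈ U) → (∀ i, ∀ u ∈ U, Yop i u ∈ U) → U = ⊥ ∨ U = ⊤)
    -- highest weight vector of weight λ, taken even
    (lam : hL →ₗ[ℂ] ℂ) (v : V) (hv : v ≠ 0) (hvev : gr v = v)
    (hXv : ∀ i, Xop i v = 0) (hwt : ∀ h : hL, ρ h v = lam h • v) :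
    (lam H = 0 →
      ∀ μ : hL →ₗ[ℂ] ℂ, sdimWt gr ρ μ = if μ = lam then 1 else 0) ∧
    (lam H ≠ 0 →
      finrank ℂ V = 4 ∧
        ∀ μ : hL →ₗ[ℂ] ℂ, sdimWt gr ρ μ =
          if μ = lam then 1 else if μ = lam - α then -2 else
            if μ = lam - 2 • α then 1 else 0) :=
  statement16_general α hα H hαH gr ρ Xop Yop hYodd hHY hYY hXY hirr lam v hv hvev hXv hwt

end Stmt16
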